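/- If a C^1 vector field j = (j^0, J) on ℝ × ℝ^d satisfies that j^0 > 0 whenever j ≠ 0, then along any integral curve γ of j (i.e. γ'(s) = j(γ(s))) starting at a point where j ≠ 0, the time component γ^0 is strictly monotonically increasing on the maximal interval of existence. -/

import Mathlib

/-!
A zero `c` of `j` is an equilibrium, and since `j` is locally Lipschitz near `c`, uniqueness of
solutions shows that an integral curve passing through `c` stays at `c` on a neighbourhood; by
connectedness it then stays at `c` on the whole interval. So an integral curve starting at a
non-zero of `j` never meets a zero, hence `(γ s).1` has derivative `(j (γ s)).1 > 0` everywhere.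
-/

open Set Filter Topology

section IntegralCurve

variable {E : Type*} [NormedAddCommGroup E] [NormedSpace ℝ E] {j : E → E} {γ : ℝ → E} {c : E}

theorem eventuallyEq_const_of_hasDerivAt_of_apply_eq_zero (hj : ContDiffAt ℝ 1 j c)
    (hc : j c = 0) {s₀ : ℝ} (hγ : ∀ᶠ s in 𝓝 s₀, HasDerivAt γ (j (γ s)) s) (hs₀ : γ s₀ = c) :
    γ =ᶠ[𝓝 s₀] fun _ => c := by
  obtain ⟨K, t, ht, hK⟩ := hj.exists_lipschitzOnWith
  have hγt : ∀ᶠ s in 𝓝 s₀, γ s ∈ t :=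
    hγ.self_of_nhds.continuousAt.eventually_mem (hs₀ ▸ ht)
  refine ODE_solution_unique_of_eventually (.of_forall fun _ => hK) (hγ.and hγt)
    (.of_forall fun s => ⟨?_, mem_of_mem_nhds ht⟩) hs₀
  simpa [hc] using hasDerivAt_const s c

theorem eqOn_const_of_hasDerivAt_of_apply_eq_zero (hj : ContDiffAt ℝ 1 j c) (hc : j c = 0)
    {I : Set ℝ} (hIo : IsOpen I) (hIc : IsPreconnected I)
    (hγ : ∀ s ∈ I, HasDerivAt γ (j (γ s)) s) {s₀ : ℝ} (hs₀I : s₀ ∈ I) (hs₀ : γ s₀ = c) :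
    EqOn γ (fun _ => c) I := by
  have hγ_nhds : ∀ s ∈ I, ∀ᶠ t in 𝓝 s, HasDerivAt γ (j (γ t)) t := fun s hs =>
    eventually_of_mem (hIo.mem_nhds hs) hγ
  suffices hI : I ⊆ {s | γ =ᶠ[𝓝 s] fun _ => c} from fun s hs => (hI hs).self_of_nhds
  refine hIc.subset_of_closure_inter_subset isOpen_setOfPred_eventually_nhds
    ⟨s₀, hs₀I, eventuallyEq_const_of_hasDerivAt_of_apply_eq_zero hj hc (hγ_nhds s₀ hs₀I) hs₀⟩ ?_
  rintro s ⟨hs_closure, hsI⟩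
  have hγs : γ s = c := by
    simpa using (hγ s hsI).continuousAt.continuousWithinAt.mem_closure (t := {c}) hs_closure
      fun t (ht : γ =ᶠ[𝓝 t] fun _ => c) => ht.self_of_nhds
  exact eventuallyEq_const_of_hasDerivAt_of_apply_eq_zero hj hc (hγ_nhds s hsI) hγs

theorem apply_ne_zero_of_hasDerivAt (hj : ContDiff ℝ 1 j) {I : Set ℝ} (hIo : IsOpen I)
    (hIc : IsPreconnected I) (hγ : ∀ s ∈ I, HasDerivAt γ (j (γ s)) s) {s₀ : ℝ} (hs₀I : s₀ ∈ I)
    (hs₀ : j (γ s₀) ≠ 0) {s : ℝ} (hs : s ∈ I) : j (γ s) ≠ 0 := fun hz =>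
  hs₀ <| eqOn_const_of_hasDerivAt_of_apply_eq_zero hj.contDiffAt hz hIo hIc hγ hs rfl hs₀I ▸ hz

end IntegralCurve

/-- If a C¹ vector field `j = (j⁰, J)` on `ℝ × ℝ^d` satisfies `j⁰ > 0` wherever `j ≠ 0`,
then along any integral curve of `j` starting at a non-node, the time component is
strictly increasing on the (maximal) interval of existence. -/
theorem stmt0 {d : ℕ} (j : ℝ × EuclideanSpace ℝ (Fin d) → ℝ × EuclideanSpace ℝ (Fin d))
    (hj : ContDiff ℝ 1 j)
    (hpos : ∀ p, j p ≠ 0 → 0 < (j p).1)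
    (a b : ℝ) (hab : a < 0) (hb : 0 < b)
    (γ : ℝ → ℝ × EuclideanSpace ℝ (Fin d))
    (hγ : ∀ s ∈ Ioo a b, HasDerivAt γ (j (γ s)) s)
    (q : EuclideanSpace ℝ (Fin d))
    (hγ0 : γ 0 = (0, q))
    (hnode : j (0, q) ≠ 0) :
    StrictMonoOn (fun s => (γ s).1) (Ioo a b) := by
  have hγ₁ : ∀ s ∈ Ioo a b, HasDerivAt (fun s => (γ s).1) (j (γ s)).1 s := fun s hs =>
    hasFDerivAt_fst.comp_hasDerivAt (f := γ) s (hγ s hs)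
  have hne : ∀ s ∈ Ioo a b, j (γ s) ≠ 0 := fun s hs =>
    apply_ne_zero_of_hasDerivAt hj isOpen_Ioo isPreconnected_Ioo hγ ⟨hab, hb⟩ (hγ0 ▸ hnode) hs
  refine strictMonoOn_of_deriv_pos (convex_Ioo a b)
    (fun s hs => (hγ₁ s hs).continuousAt.continuousWithinAt) fun s hs => ?_
  rw [interior_Ioo] at hs
  rw [(hγ₁ s hs).deriv]
  exact hpos _ (hne s hs)
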